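/- Let (S_n)_{n≥1} be a demimartingale with E[τ] < ∞ for a stopping time τ whose indicators I{τ ≤ j} are componentwise nondecreasing functions of S_1,...,S_j, and suppose the increments satisfy |S_k − S_{k−1}| ≤ M for all k ≥ 2 and some M > 0. Then E[S_τ] ≤ E[S_1]. -/

import Mathlib

/-!
Up to time `n`, the stopped process gains `(S (j+1) - S j) * 1{j < τ}` at each step `j`. Since
`1{j < τ} = 1 - 1{τ ≤ j}` is an antitone function of `S 1, …, S j`, the demimartingale property
makes each such gain nonpositive in expectation, so `E[S (τ ∧ n)] ≤ E[S 1]`. Bounded increments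
dominate `|S (τ ∧ n)|` by `|S 1| + M τ`, which is integrable, and dominated convergence lets
`n → ∞`.
-/

open MeasureTheory Real

/-- A sequence `S 1, S 2, ...` of integrable random variables is a *demimartingale* if
`E[(S (j+1) - S j) * f (S 1, ..., S j)] ≥ 0` for every componentwise nondecreasing `f`
whenever the expectation is defined. -/
def IsDemimartingale {Ω : Type*} [MeasurableSpace Ω] (μ : Measure Ω) (S : ℕ → Ω → ℝ) : Prop :=
  (∀ n, 1 ≤ n → Integrable (S n) μ) ∧
  ∀ (j : ℕ), 1 ≤ j → ∀ f : (Fin j → ℝ) → ℝ, Monotone f →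
    Integrable (fun ω => (S (j + 1) ω - S j ω) * f (fun i => S (i.val + 1) ω)) μ →
    0 ≤ ∫ ω, (S (j + 1) ω - S j ω) * f (fun i => S (i.val + 1) ω) ∂μ

/-- A sequence `S 1, S 2, ...` of integrable random variables is a *demisubmartingale* if
`E[(S (j+1) - S j) * f (S 1, ..., S j)] ≥ 0` for every nonnegative componentwise
nondecreasing `f` whenever the expectation is defined. -/
def IsDemisubmartingale {Ω : Type*} [MeasurableSpace Ω] (μ : Measure Ω) (S : ℕ → Ω → ℝ) : Prop :=
  (∀ n, 1 ≤ n → Integrable (S n) μ) ∧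
  ∀ (j : ℕ), 1 ≤ j → ∀ f : (Fin j → ℝ) → ℝ, Monotone f → (∀ x, 0 ≤ f x) →
    Integrable (fun ω => (S (j + 1) ω - S j ω) * f (fun i => S (i.val + 1) ω)) μ →
    0 ≤ ∫ ω, (S (j + 1) ω - S j ω) * f (fun i => S (i.val + 1) ω) ∂μ

/-- A sequence `X 1, X 2, ...` is *positively associated* if every finite collection
`X 1, ..., X n` satisfies `Cov (f (X 1,...,X n), g (X 1,...,X n)) ≥ 0` for all
componentwise nondecreasing `f`, `g` for which the covariance is defined. -/
def PositivelyAssociated {Ω : Type*} [MeasurableSpace Ω] (μ : Measure Ω) (X : ℕ → Ω → ℝ) : Prop :=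
  ∀ (n : ℕ) (f g : (Fin n → ℝ) → ℝ), Monotone f → Monotone g →
    Integrable (fun ω => f (fun i => X (i.val + 1) ω)) μ →
    Integrable (fun ω => g (fun i => X (i.val + 1) ω)) μ →
    Integrable (fun ω => f (fun i => X (i.val + 1) ω) * g (fun i => X (i.val + 1) ω)) μ →
    (∫ ω, f (fun i => X (i.val + 1) ω) ∂μ) * (∫ ω, g (fun i => X (i.val + 1) ω) ∂μ)
      ≤ ∫ ω, f (fun i => X (i.val + 1) ω) * g (fun i => X (i.val + 1) ω) ∂μ

open Filter Topology

lemma abs_apply_min_le {s : ℕ → ℝ} {M : ℝ} (hM : 0 ≤ M)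
    (hinc : ∀ k, 2 ≤ k → |s k - s (k - 1)| ≤ M) {t n : ℕ} (ht : 1 ≤ t) (hn : 1 ≤ n) :
    |s (min t n)| ≤ |s 1| + M * t := by
  have hdist : dist (s 1) (s (min t n)) ≤ ∑ _i ∈ Finset.Ico 1 (min t n), M :=
    dist_le_Ico_sum_of_dist_le (le_min ht hn) fun {k} hk _ => by
      simpa [Real.dist_eq, abs_sub_comm] using hinc (k + 1) (by omega)
  have hsum : ∑ _i ∈ Finset.Ico 1 (min t n), M ≤ M * t := by
    rw [Finset.sum_const, Nat.card_Ico, nsmul_eq_mul, mul_comm]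
    gcongr
    exact_mod_cast (Nat.sub_le _ _).trans (min_le_left t n)
  rw [Real.dist_eq] at hdist
  linarith [abs_sub_abs_le_abs_sub (s (min t n)) (s 1), abs_sub_comm (s 1) (s (min t n))]

lemma stopped_succ {Ω : Type*} (S : ℕ → Ω → ℝ) (τ : Ω → ℕ) (n : ℕ) :
    (fun ω => S (min (τ ω) (n + 1)) ω) =
      fun ω => S (min (τ ω) n) ω + (S (n + 1) ω - S n ω) * if n < τ ω then 1 else 0 := by
  funext ω
  split_ifs with h
  · rw [min_eq_right h, min_eq_right h.le]
    ring
  · rw [min_eq_left (by omega), min_eq_left (by omega)]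
    ring

section StoppedProcess

variable {Ω : Type*} [MeasurableSpace Ω] {μ : Measure Ω} {S : ℕ → Ω → ℝ} {τ : Ω → ℕ}

lemma aemeasurable_of_aemeasurable_natCast (hτ : AEMeasurable (fun ω => (τ ω : ℝ)) μ) :
    AEMeasurable τ μ := by
  simpa only [Function.comp_def, Nat.floor_natCast] using
    (Nat.measurable_floor (R := ℝ)).comp_aemeasurable hτ

-- A monotone function on `Fin j → ℝ` need not be measurable, so measurability of `1{j < τ}`
-- has to come from `τ` rather than from its representation as a monotone function of the `S i`.
lemma integrable_increment_mul_ite_lt (hS : ∀ n, 1 ≤ n → Integrable (S n) μ)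
    (hτ : AEMeasurable τ μ) {j : ℕ} (hj : 1 ≤ j) :
    Integrable (fun ω => (S (j + 1) ω - S j ω) * if j < τ ω then 1 else 0) μ :=
  ((hS (j + 1) (by omega)).sub (hS j hj)).mul_bdd (c := 1)
    ((measurable_from_top (f := fun t : ℕ => if j < t then (1 : ℝ) else 0)).comp_aemeasurable
      hτ).aestronglyMeasurable
    (ae_of_all _ fun ω => by split_ifs <;> simp)

lemma integrable_stopped (hS : ∀ n, 1 ≤ n → Integrable (S n) μ) (hτ1 : ∀ ω, 1 ≤ τ ω)
    (hτ : AEMeasurable τ μ) (n : ℕ) (hn : 1 ≤ n) :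
    Integrable (fun ω => S (min (τ ω) n) ω) μ := by
  induction n, hn using Nat.le_induction with
  | base => simpa only [min_eq_right (hτ1 _)] using hS 1 le_rfl
  | succ n hn ih =>
    rw [stopped_succ]
    exact ih.add (integrable_increment_mul_ite_lt hS hτ hn)

namespace IsDemimartingale

lemma integral_mul_nonpos_of_antitone (hS : IsDemimartingale μ S) {j : ℕ} (hj : 1 ≤ j)
    {g : (Fin j → ℝ) → ℝ} (hg : Antitone g)
    (hint : Integrable (fun ω => (S (j + 1) ω - S j ω) * g (fun i => S (i.val + 1) ω)) μ) :
    ∫ ω, (S (j + 1) ω - S j ω) * g (fun i => S (i.val + 1) ω) ∂μ ≤ 0 := by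
  have h := hS.2 j hj (fun x => -g x) hg.neg (by simpa only [mul_neg] using hint.fun_neg)
  simp only [mul_neg, integral_neg] at h
  linarith

lemma integral_mul_ite_lt_nonpos (hS : IsDemimartingale μ S) (hτ : AEMeasurable τ μ) {j : ℕ}
    (hj : 1 ≤ j) {h : (Fin j → ℝ) → ℝ} (hh : Monotone h)
    (hτh : ∀ ω, (if τ ω ≤ j then (1 : ℝ) else 0) = h (fun i => S (i.val + 1) ω)) :
    ∫ ω, (S (j + 1) ω - S j ω) * (if j < τ ω then 1 else 0) ∂μ ≤ 0 := by
  have hlt : ∀ ω, (if j < τ ω then (1 : ℝ) else 0) = 1 - h (fun i => S (i.val + 1) ω) := by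
    intro ω
    rw [← hτh ω]
    split_ifs <;> first | omega | norm_num
  simp only [hlt]
  exact hS.integral_mul_nonpos_of_antitone hj (fun x y hxy => sub_le_sub_left (hh hxy) 1)
    (by simpa only [hlt] using integrable_increment_mul_ite_lt hS.1 hτ hj)

lemma integral_stopped_le (hS : IsDemimartingale μ S) (hτ1 : ∀ ω, 1 ≤ τ ω)
    (hτ : AEMeasurable τ μ)
    (hind : ∀ j, 1 ≤ j → ∃ h : (Fin j → ℝ) → ℝ, Monotone h ∧
      ∀ ω, (if τ ω ≤ j then (1 : ℝ) else 0) = h (fun i => S (i.val + 1) ω))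
    (n : ℕ) (hn : 1 ≤ n) :
    ∫ ω, S (min (τ ω) n) ω ∂μ ≤ ∫ ω, S 1 ω ∂μ := by
  induction n, hn using Nat.le_induction with
  | base => simp only [min_eq_right (hτ1 _), le_rfl]
  | succ n hn ih =>
    obtain ⟨h, hh, hτh⟩ := hind n hn
    rw [stopped_succ, integral_add (integrable_stopped hS.1 hτ1 hτ n hn)
      (integrable_increment_mul_ite_lt hS.1 hτ hn)]
    linarith [hS.integral_mul_ite_lt_nonpos hτ hn hh hτh]

end IsDemimartingale

end StoppedProcess

theorem stmt_7_general {Ω : Type*} [MeasurableSpace Ω] (μ : Measure Ω)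
    (S : ℕ → Ω → ℝ) (hS : IsDemimartingale μ S)
    (M : ℝ) (hM : 0 < M)
    (hinc : ∀ k, 2 ≤ k → ∀ ω, |S k ω - S (k - 1) ω| ≤ M)
    (τ : Ω → ℕ) (hτ1 : ∀ ω, 1 ≤ τ ω)
    (hτint : Integrable (fun ω => (τ ω : ℝ)) μ)
    (hind : ∀ j, 1 ≤ j →
      ∃ h : (Fin j → ℝ) → ℝ, Monotone h ∧
        ∀ ω, (if τ ω ≤ j then (1 : ℝ) else 0) = h (fun i => S (i.val + 1) ω)) :
    ∫ ω, S (τ ω) ω ∂μ ≤ ∫ ω, S 1 ω ∂μ := by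
  have hτ : AEMeasurable τ μ := aemeasurable_of_aemeasurable_natCast hτint.aemeasurable
  have hlim : Tendsto (fun n => ∫ ω, S (min (τ ω) n) ω ∂μ) atTop (𝓝 (∫ ω, S (τ ω) ω ∂μ)) := by
    refine tendsto_integral_filter_of_dominated_convergence (fun ω => |S 1 ω| + M * τ ω) ?_ ?_
      ((hS.1 1 le_rfl).abs.add (hτint.const_mul M)) ?_
    · filter_upwards [eventually_ge_atTop 1] with n hn
      exact (integrable_stopped hS.1 hτ1 hτ n hn).aestronglyMeasurable
    · filter_upwards [eventually_ge_atTop 1] with n hn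
      exact ae_of_all _ fun ω => abs_apply_min_le hM.le (fun k hk => hinc k hk ω) (hτ1 ω) hn
    · exact ae_of_all _ fun ω => tendsto_atTop_of_eventually_const fun n hn => by
        rw [min_eq_left hn]
  exact le_of_tendsto hlim (eventually_atTop.2 ⟨1, hS.integral_stopped_le hτ1 hτ hind⟩)

/-- Optional sampling for a demimartingale with bounded increments and a stopping time of
finite expectation whose indicators `I{τ ≤ j}` are componentwise nondecreasing functions of
`S 1, ..., S j`: `E[S τ] ≤ E[S 1]`. -/
theorem stmt_7 {Ω : Type*} [MeasurableSpace Ω] (μ : Measure Ω) [IsProbabilityMeasure μ]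
    (S : ℕ → Ω → ℝ) (hS : IsDemimartingale μ S)
    (M : ℝ) (hM : 0 < M)
    (hinc : ∀ k, 2 ≤ k → ∀ ω, |S k ω - S (k - 1) ω| ≤ M)
    (τ : Ω → ℕ) (hτ1 : ∀ ω, 1 ≤ τ ω)
    (hτint : Integrable (fun ω => (τ ω : ℝ)) μ)
    (hind : ∀ j, 1 ≤ j →
      ∃ h : (Fin j → ℝ) → ℝ, Monotone h ∧
        ∀ ω, (if τ ω ≤ j then (1 : ℝ) else 0) = h (fun i => S (i.val + 1) ω)) :
    ∫ ω, S (τ ω) ω ∂μ ≤ ∫ ω, S 1 ω ∂μ :=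
  stmt_7_general μ S hS M hM hinc τ hτ1 hτint hind
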